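/- arXiv:2311.13889 — 5 statements merged into one kernel-verified Lean document; each statement's English description precedes it below -/
import Mathlib

section
/- Let n ≥ 1, let W ∈ ℝ^{2n×2n}, V ∈ ℝ^{n×n}, let 0 < γ ≤ 1 and ε > 0, and set S := WᵀW + ε·I_{2n}. Then the matrix T := (1/2)·(S₁₁/γ² + S₂₂) + V − Vᵀ is invertible, and the matrix A := S₁₂ · T⁻¹ ∈ ℝ^{n×n} satisfies |λ| < γ for every complex eigenvalue λ of A; in particular A is Schur. -/
/-!
Let `y ≠ 0` satisfy `S₁₂ y = μ T y`; such a `y = T⁻¹ v` comes from any eigenvector `v` of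
`A = S₁₂ T⁻¹`, and then `μ (y* T y) = y* S₁₂ y`. Positive definiteness of `S` gives
`2γ |y* S₁₂ y| < y* S₁₁ y + γ² y* S₂₂ y = 2γ² Re (y* T y)`, because `V - Vᵀ` contributes nothing
to the real part. Hence `|μ| |y* T y| < γ Re (y* T y) ≤ γ |y* T y|`, so `|μ| < γ`. The same
inequality shows that `T y = 0` forces `y = 0`, so `T` is invertible.
-/

open Matrix Polynomial

/-- A real square matrix is Schur if every complex root of its characteristic
polynomial has modulus strictly less than one. -/
def IsSchur {n : ℕ} (A : Matrix (Fin n) (Fin n) ℝ) : Prop :=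
  ∀ μ : ℂ, ((A.charpoly).map (algebraMap ℝ ℂ)).IsRoot μ → ‖μ‖ < 1

open scoped ComplexOrder

namespace Matrix

theorem exists_mulVec_eq_smul_of_isRoot_charpoly {K m : Type*} [Field K] [Fintype m]
    [DecidableEq m] {A : Matrix m m K} {μ : K} (h : A.charpoly.IsRoot μ) :
    ∃ v ≠ 0, A *ᵥ v = μ • v := by
  rw [IsRoot, eval_charpoly, ← exists_mulVec_eq_zero_iff] at h
  obtain ⟨v, hv, hAv⟩ := h
  refine ⟨v, hv, ?_⟩
  rw [sub_mulVec, sub_eq_zero, scalar_apply] at hAv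
  ext i
  simp [← hAv, mulVec_diagonal]

section Semiring

variable {α l m : Type*} [Fintype l] [Fintype m]

theorem star_star_dotProduct_mulVec [NonUnitalSemiring α] [StarRing α] (M : Matrix m m α)
    (y : m → α) : star (star y ⬝ᵥ M *ᵥ y) = star y ⬝ᵥ Mᴴ *ᵥ y := by
  rw [← star_dotProduct_star, star_star, star_mulVec, ← dotProduct_mulVec]

theorem star_sum_elim_dotProduct_fromBlocks_mulVec [NonUnitalNonAssocSemiring α] [Star α]
    (A : Matrix l l α) (B : Matrix l m α) (C : Matrix m l α) (D : Matrix m m α)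
    (u : l → α) (v : m → α) :
    star (Sum.elim u v) ⬝ᵥ fromBlocks A B C D *ᵥ Sum.elim u v =
      star u ⬝ᵥ A *ᵥ u + star u ⬝ᵥ B *ᵥ v + (star v ⬝ᵥ C *ᵥ u + star v ⬝ᵥ D *ᵥ v) := by
  rw [fromBlocks_mulVec, dotProduct_block]
  simp only [Sum.elim_comp_inl, Sum.elim_comp_inr, dotProduct_add]
  rfl

end Semiring

variable {𝕜 n : Type*} [RCLike 𝕜] [Fintype n]

theorem re_star_dotProduct_sub_conjTranspose_mulVec (M : Matrix n n 𝕜) (y : n → 𝕜) :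
    RCLike.re (star y ⬝ᵥ (M - Mᴴ) *ᵥ y) = 0 := by
  rw [sub_mulVec, dotProduct_sub, ← star_star_dotProduct_mulVec, map_sub, RCLike.star_def,
    RCLike.conj_re, sub_self]

theorem posDef_conjTranspose_mul_self_add_smul_one [DecidableEq n] {m : Type*} [Fintype m]
    (W : Matrix m n 𝕜) {ε : ℝ} (hε : 0 < ε) : (Wᴴ * W + ε • 1).PosDef :=
  PosDef.posSemidef_add (posSemidef_conjTranspose_mul_self W) (PosDef.one.smul hε)

theorem PosDef.two_mul_norm_toBlocks₁₂_lt {S : Matrix (n ⊕ n) (n ⊕ n) 𝕜} (hS : S.PosDef)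
    {y : n → 𝕜} (hy : y ≠ 0) {t : ℝ} (ht : 0 < t) :
    2 * t * ‖star y ⬝ᵥ S.toBlocks₁₂ *ᵥ y‖ <
      RCLike.re (star y ⬝ᵥ S.toBlocks₁₁ *ᵥ y) +
        t ^ 2 * RCLike.re (star y ⬝ᵥ S.toBlocks₂₂ *ᵥ y) := by
  set c := star y ⬝ᵥ S.toBlocks₁₂ *ᵥ y
  have h21 : S.toBlocks₂₁ = S.toBlocks₁₂ᴴ := by
    have hH := hS.isHermitian
    rw [← fromBlocks_toBlocks S, isHermitian_fromBlocks_iff] at hH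
    exact hH.2.1.symm
  -- Test `S` on `(y, s • y)`, with the phase of `s` chosen so that both cross terms are `-t ‖c‖`.
  obtain ⟨ζ, hζ, hζc⟩ := RCLike.exists_norm_eq_mul_self c
  set s : 𝕜 := -(t : 𝕜) * ζ
  have hsc : s * c = ((-(t * ‖c‖) : ℝ) : 𝕜) := by
    rw [mul_assoc, ← hζc]
    push_cast
    ring
  have hss : star s * s = ((t ^ 2 : ℝ) : 𝕜) := by
    rw [RCLike.star_def, RCLike.conj_mul, norm_mul, norm_neg, hζ, RCLike.norm_ofReal,
      abs_of_pos ht]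
    push_cast
    ring
  have hw : Sum.elim y (s • y) ≠ 0 := fun h => hy (by simpa using congrArg (· ∘ Sum.inl) h)
  have hpos := hS.dotProduct_mulVec_pos hw
  rw [← fromBlocks_toBlocks S, star_sum_elim_dotProduct_fromBlocks_mulVec, h21, star_smul,
    mulVec_smul, mulVec_smul, dotProduct_smul, smul_dotProduct, smul_dotProduct, dotProduct_smul,
    ← star_star_dotProduct_mulVec, smul_smul, smul_eq_mul, smul_eq_mul, smul_eq_mul, ← star_mul',
    hsc, hss, RCLike.star_def, RCLike.conj_ofReal] at hpos
  have hre := (RCLike.pos_iff.mp hpos).1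
  simp only [map_add, RCLike.re_ofReal_mul, RCLike.ofReal_re] at hre
  linarith

noncomputable def schurDenominator (S : Matrix (n ⊕ n) (n ⊕ n) 𝕜) (V : Matrix n n 𝕜) (γ : ℝ) :
    Matrix n n 𝕜 :=
  (1 / 2 : ℝ) • ((γ ^ 2)⁻¹ • S.toBlocks₁₁ + S.toBlocks₂₂) + V - Vᴴ

theorem re_star_dotProduct_schurDenominator_mulVec (S : Matrix (n ⊕ n) (n ⊕ n) 𝕜)
    (V : Matrix n n 𝕜) (γ : ℝ) (y : n → 𝕜) :
    RCLike.re (star y ⬝ᵥ schurDenominator S V γ *ᵥ y) =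
      2⁻¹ * ((γ ^ 2)⁻¹ * RCLike.re (star y ⬝ᵥ S.toBlocks₁₁ *ᵥ y) +
        RCLike.re (star y ⬝ᵥ S.toBlocks₂₂ *ᵥ y)) := by
  rw [schurDenominator, add_sub_assoc, add_mulVec, dotProduct_add, map_add,
    re_star_dotProduct_sub_conjTranspose_mulVec, add_zero, smul_mulVec, add_mulVec, smul_mulVec,
    dotProduct_smul, dotProduct_add, dotProduct_smul, RCLike.smul_re, map_add, RCLike.smul_re]
  ring

theorem PosDef.norm_toBlocks₁₂_lt {S : Matrix (n ⊕ n) (n ⊕ n) 𝕜} (hS : S.PosDef)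
    (V : Matrix n n 𝕜) {γ : ℝ} (hγ : 0 < γ) {y : n → 𝕜} (hy : y ≠ 0) :
    ‖star y ⬝ᵥ S.toBlocks₁₂ *ᵥ y‖ < γ * RCLike.re (star y ⬝ᵥ schurDenominator S V γ *ᵥ y) := by
  have h := hS.two_mul_norm_toBlocks₁₂_lt hy hγ
  rw [re_star_dotProduct_schurDenominator_mulVec]
  field_simp
  linarith

theorem PosDef.isUnit_schurDenominator [DecidableEq n] {S : Matrix (n ⊕ n) (n ⊕ n) 𝕜}
    (hS : S.PosDef) (V : Matrix n n 𝕜) {γ : ℝ} (hγ : 0 < γ) :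
    IsUnit (schurDenominator S V γ) := by
  rw [isUnit_iff_isUnit_det, isUnit_iff_ne_zero]
  intro hdet
  obtain ⟨y, hy, hTy⟩ := exists_mulVec_eq_zero_iff.mpr hdet
  have h := hS.norm_toBlocks₁₂_lt V hγ hy
  rw [hTy, dotProduct_zero, map_zero, mul_zero] at h
  exact (norm_nonneg _).not_gt h

theorem PosDef.norm_lt_of_toBlocks₁₂_mulVec_eq_smul {S : Matrix (n ⊕ n) (n ⊕ n) 𝕜}
    (hS : S.PosDef) (V : Matrix n n 𝕜) {γ : ℝ} (hγ : 0 < γ) {y : n → 𝕜} (hy : y ≠ 0) {μ : 𝕜}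
    (h : S.toBlocks₁₂ *ᵥ y = μ • schurDenominator S V γ *ᵥ y) : ‖μ‖ < γ := by
  set d := star y ⬝ᵥ schurDenominator S V γ *ᵥ y
  have hlt := hS.norm_toBlocks₁₂_lt V hγ hy
  rw [h, dotProduct_smul, smul_eq_mul, norm_mul] at hlt
  have hlt' : ‖μ‖ * ‖d‖ < γ * ‖d‖ :=
    hlt.trans_le (mul_le_mul_of_nonneg_left (RCLike.re_le_norm d) hγ.le)
  exact lt_of_mul_lt_mul_right hlt' (norm_nonneg d)

theorem PosDef.norm_lt_of_isRoot_charpoly [DecidableEq n] {S : Matrix (n ⊕ n) (n ⊕ n) 𝕜}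
    (hS : S.PosDef) (V : Matrix n n 𝕜) {γ : ℝ} (hγ : 0 < γ) {A : Matrix n n 𝕜}
    (hA : A * schurDenominator S V γ = S.toBlocks₁₂) {μ : 𝕜} (hμ : A.charpoly.IsRoot μ) :
    ‖μ‖ < γ := by
  set T := schurDenominator S V γ
  have hdet : IsUnit T.det := (isUnit_iff_isUnit_det T).mp (hS.isUnit_schurDenominator V hγ)
  obtain ⟨v, hv, hAv⟩ := exists_mulVec_eq_smul_of_isRoot_charpoly hμ
  have hTy : T *ᵥ (T⁻¹ *ᵥ v) = v := by rw [mulVec_mulVec, mul_nonsing_inv T hdet, one_mulVec]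
  refine hS.norm_lt_of_toBlocks₁₂_mulVec_eq_smul V hγ (y := T⁻¹ *ᵥ v) (fun h => hv ?_) ?_
  · rw [← hTy, h, mulVec_zero]
  · rw [← hA, ← mulVec_mulVec, hTy, hAv]

end Matrix

theorem stmt_0_general {n : ℕ}
    (W : Matrix (Fin n ⊕ Fin n) (Fin n ⊕ Fin n) ℝ)
    (V : Matrix (Fin n) (Fin n) ℝ) (γ ε : ℝ)
    (hγ0 : 0 < γ) (hγ1 : γ ≤ 1) (hε : 0 < ε) :
    let S := Wᵀ * W + ε • (1 : Matrix (Fin n ⊕ Fin n) (Fin n ⊕ Fin n) ℝ)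
    let T := (1 / 2 : ℝ) • ((γ ^ 2)⁻¹ • S.toBlocks₁₁ + S.toBlocks₂₂) + V - Vᵀ
    let A := S.toBlocks₁₂ * T⁻¹
    IsUnit T ∧
      (∀ μ : ℂ, ((A.charpoly).map (algebraMap ℝ ℂ)).IsRoot μ → ‖μ‖ < γ) ∧
      IsSchur A := by
  intro S T A
  have hS : S.PosDef := by
    simpa only [conjTranspose_eq_transpose_of_trivial] using
      posDef_conjTranspose_mul_self_add_smul_one W hε
  have hT : T = schurDenominator S V γ := by
    rw [schurDenominator, conjTranspose_eq_transpose_of_trivial]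
  have hTunit : IsUnit T := hT ▸ hS.isUnit_schurDenominator V hγ0
  set f := algebraMap ℝ ℂ
  have hSc : (S.map f).PosDef := by
    have hmap : S.map f = (W.map f)ᴴ * W.map f + ε • 1 := by
      ext i j
      by_cases hij : i = j <;> simp [S, f, mul_apply, hij]
    exact hmap ▸ posDef_conjTranspose_mul_self_add_smul_one _ hε
  have hTc : T.map f = schurDenominator (S.map f) (V.map f) γ := by
    ext i j
    simp [T, f, schurDenominator, toBlocks₁₁, toBlocks₂₂]
  have hAT : A.map f * schurDenominator (S.map f) (V.map f) γ = (S.map f).toBlocks₁₂ := by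
    rw [← hTc, ← Matrix.map_mul, Matrix.mul_assoc,
      nonsing_inv_mul T ((isUnit_iff_isUnit_det T).mp hTunit), Matrix.mul_one]
    rfl
  have hroots : ∀ μ : ℂ, (A.charpoly.map f).IsRoot μ → ‖μ‖ < γ := fun μ hμ =>
    hSc.norm_lt_of_isRoot_charpoly _ hγ0 hAT (by rwa [charpoly_map])
  exact ⟨hTunit, hroots, fun μ hμ => (hroots μ hμ).trans_le hγ1⟩

theorem stmt_0 {n : ℕ} (hn : 1 ≤ n)
    (W : Matrix (Fin n ⊕ Fin n) (Fin n ⊕ Fin n) ℝ)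
    (V : Matrix (Fin n) (Fin n) ℝ) (γ ε : ℝ)
    (hγ0 : 0 < γ) (hγ1 : γ ≤ 1) (hε : 0 < ε) :
    let S := Wᵀ * W + ε • (1 : Matrix (Fin n ⊕ Fin n) (Fin n ⊕ Fin n) ℝ)
    let T := (1 / 2 : ℝ) • ((γ ^ 2)⁻¹ • S.toBlocks₁₁ + S.toBlocks₂₂) + V - Vᵀ
    let A := S.toBlocks₁₂ * T⁻¹
    IsUnit T ∧
      (∀ μ : ℂ, ((A.charpoly).map (algebraMap ℝ ℂ)).IsRoot μ → ‖μ‖ < γ) ∧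
      IsSchur A :=
  stmt_0_general W V γ ε hγ0 hγ1 hε
end

section
/- Let A ∈ ℝ^{n×n} be a Schur matrix and let ε > 0. Then there exist matrices W ∈ ℝ^{2n×2n} and V ∈ ℝ^{n×n} such that, setting S := WᵀW + ε·I_{2n}, the matrix S₁₁ + V − Vᵀ is invertible, S₂₂ is invertible, and A = I_n − 2·(S₁₁ + V − Vᵀ)⁻¹ · S₁₂ · S₂₂⁻¹ · S₂₁. -/
open Matrix Polynomial

/-!
A Schur matrix satisfies the discrete Lyapunov equation `Aᵀ P A = P - 1` with
`P = ∑ₖ (Aᵀ)ᵏ Aᵏ` positive definite; the series converges because, by Gelfand's formula,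
`‖Aᵏ‖` decays geometrically. With `B = (1 - A)⁻¹` the equation becomes
`P B + Bᵀ P = P + Bᵀ B`. Take `S = [[t (P B + Bᵀ P), Y], [Y, σ 1]]` with `Y² = t σ P` and
`V = t P B`: then `S₁₁ + V - Vᵀ = 2 t P B` and `S₁₂ S₂₂⁻¹ S₂₁ = t P`, so the right-hand side is
`1 - B⁻¹ = A`. For `t = ε r`, `σ = ε (1 + r)`, where `1 + P ≤ r Bᵀ B`, the Schur complement of
the lower right block of `S - ε 1` is `ε (r Bᵀ B - 1 - P) ≥ 0`, so `S - ε 1 = Wᵀ W`.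
-/

open Filter NNReal

theorem exists_lt_one_eventually_nnnorm_pow_le {𝔸 : Type*} [NormedRing 𝔸] [NormedAlgebra ℂ 𝔸]
    [CompleteSpace 𝔸] {a : 𝔸} (h : ∀ z ∈ spectrum ℂ a, ‖z‖₊ < 1) :
    ∃ r : ℝ≥0, r < 1 ∧ ∀ᶠ k in atTop, ‖a ^ k‖₊ ≤ r ^ k := by
  rcases subsingleton_or_nontrivial 𝔸 with h𝔸 | h𝔸
  · exact ⟨0, zero_lt_one, .of_forall fun k => by simp [Subsingleton.elim (a ^ k) 0]⟩
  obtain ⟨ρ, hρa, hρ1⟩ := exists_between (spectrum.spectralRadius_lt_of_forall_lt a h)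
  lift ρ to ℝ≥0 using ne_top_of_lt hρ1
  refine ⟨ρ, mod_cast hρ1, ?_⟩
  filter_upwards [eventually_lt_of_limsup_lt
    ((spectrum.limsup_pow_nnnorm_pow_one_div_le_spectralRadius a).trans_lt hρa),
    eventually_ne_atTop 0] with k hk hk0
  rw [← ENNReal.coe_rpow_of_nonneg _ (by positivity), ENNReal.coe_lt_coe, one_div,
    NNReal.rpow_inv_lt_iff (by positivity), NNReal.rpow_natCast] at hk
  exact hk.le

namespace Matrix

section RCLike

open scoped ComplexOrder

variable {ι 𝕜 : Type*} [Fintype ι] [RCLike 𝕜]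

theorem isClosed_setOf_posSemidef : IsClosed {M : Matrix ι ι 𝕜 | M.PosSemidef} := by
  simp only [posSemidef_iff_dotProduct_mulVec, Set.ofPred_and, Set.ofPred_forall]
  refine (isClosed_eq ?_ ?_).inter (isClosed_iInter fun x => isClosed_le continuous_const ?_)
  all_goals fun_prop

theorem PosSemidef.tsum {β : Type*} {f : β → Matrix ι ι 𝕜} (hf : ∀ k, (f k).PosSemidef) :
    (∑' k, f k).PosSemidef := by
  by_cases h : Summable f
  · exact isClosed_setOf_posSemidef.mem_of_tendsto h.hasSum
      (.of_forall fun s => posSemidef_sum s fun k _ => hf k)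
  · rw [tsum_eq_zero_of_not_summable h]
    exact .zero

variable [DecidableEq ι]

open scoped MatrixOrder in
theorem PosSemidef.exists_isHermitian_mul_self_eq {M : Matrix ι ι 𝕜} (hM : M.PosSemidef) :
    ∃ Y : Matrix ι ι 𝕜, Y.IsHermitian ∧ Y * Y = M :=
  ⟨CFC.sqrt M, (CFC.sqrt_nonneg M).posSemidef.isHermitian, CFC.sqrt_mul_sqrt_self M hM.nonneg⟩

open scoped MatrixOrder in
theorem IsHermitian.exists_posSemidef_smul_one_sub {M : Matrix ι ι 𝕜} (hM : M.IsHermitian) :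
    ∃ r : ℝ, 0 < r ∧ (r • 1 - M).PosSemidef := by
  obtain ⟨b, hb⟩ := M.finite_real_spectrum.bddAbove
  refine ⟨max b 1, by positivity, ?_⟩
  have := le_algebraMap_of_spectrum_le (fun x hx => (hb hx).trans (le_max_left b 1))
    hM.isSelfAdjoint
  rwa [le_iff, Algebra.algebraMap_eq_smul_one] at this

theorem IsHermitian.exists_posSemidef_smul_conjTranspose_mul_self_sub {M B C : Matrix ι ι 𝕜}
    (hM : M.IsHermitian) (hCB : C * B = 1) :
    ∃ r : ℝ, 0 < r ∧ (r • (Bᴴ * B) - M).PosSemidef := by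
  obtain ⟨r, hr0, hr⟩ := (isHermitian_conjTranspose_mul_mul C hM).exists_posSemidef_smul_one_sub
  refine ⟨r, hr0, ?_⟩
  have hBC : Bᴴ * Cᴴ = 1 := by rw [← conjTranspose_mul, hCB, conjTranspose_one]
  have h := hr.conjTranspose_mul_mul_same B
  rwa [Matrix.mul_sub, Matrix.sub_mul, Matrix.mul_smul, Matrix.smul_mul, Matrix.mul_one,
    ← Matrix.mul_assoc, ← Matrix.mul_assoc, hBC, Matrix.one_mul, Matrix.mul_assoc, hCB,
    Matrix.mul_one] at h

end RCLike

variable {ι : Type*} [Fintype ι] [DecidableEq ι]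

theorem exists_posDef_transpose_mul_mul_eq_sub_one {A : Matrix ι ι ℝ}
    (hA : Summable fun k => (Aᵀ) ^ k * A ^ k) :
    ∃ P : Matrix ι ι ℝ, P.PosDef ∧ Aᵀ * P * A = P - 1 := by
  set P := ∑' k, (Aᵀ) ^ k * A ^ k
  have hshift : Aᵀ * P * A = ∑' k, (Aᵀ) ^ (k + 1) * A ^ (k + 1) := by
    rw [← hA.tsum_mul_left, ← (hA.mul_left Aᵀ).tsum_mul_right]
    exact tsum_congr fun k => by rw [pow_succ' Aᵀ, pow_succ A]; simp only [Matrix.mul_assoc]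
  have hP : P = 1 + Aᵀ * P * A := by
    rw [hshift]
    exact hA.tsum_eq_zero_add.trans (by simp)
  refine ⟨P, ?_, eq_sub_of_add_eq' hP.symm⟩
  rw [hP, hshift]
  refine PosDef.one.add_posSemidef (PosSemidef.tsum fun k => ?_)
  simpa [transpose_pow] using posSemidef_conjTranspose_mul_self (A ^ (k + 1))

theorem mul_add_transpose_mul_eq {R : Type*} [CommRing R] {A P B : Matrix ι ι R}
    (hP : Aᵀ * P * A = P - 1) (hB : (1 - A) * B = 1) : P * B + Bᵀ * P = P + Bᵀ * B := by
  have hAB : A * B = B - 1 := by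
    rw [Matrix.sub_mul, Matrix.one_mul] at hB
    rw [← hB]
    abel
  have hBA : Bᵀ * Aᵀ = Bᵀ - 1 := by rw [← transpose_mul, hAB, transpose_sub, transpose_one]
  have h : (Bᵀ - 1) * P * (B - 1) = Bᵀ * (P - 1) * B := by
    rw [← hAB, ← hBA, ← hP]
    simp only [Matrix.mul_assoc]
  rw [← sub_eq_zero]
  calc P * B + Bᵀ * P - (P + Bᵀ * B) = Bᵀ * (P - 1) * B - (Bᵀ - 1) * P * (B - 1) := by
        noncomm_ring
    _ = 0 := by rw [h, sub_self]

theorem inv_smul_one {K : Type*} [Field K] {c : K} (hc : c ≠ 0) :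
    (c • 1 : Matrix ι ι K)⁻¹ = c⁻¹ • 1 :=
  inv_eq_left_inv (by rw [smul_mul_smul_comm, inv_mul_cancel₀ hc, Matrix.one_mul, one_smul])

theorem eq_one_sub_two_smul_inv_mul_mul {K : Type*} [Field K] [CharZero K]
    {A M Y : Matrix ι ι K} {σ : K} (hσ : σ ≠ 0) (hM : IsUnit M)
    (hY : Y * Y = (σ / 2) • (M * (1 - A))) :
    A = 1 - (2 : K) • (M⁻¹ * Y * (σ • 1)⁻¹ * Y) := by
  have h : Y * ((σ • 1)⁻¹ * Y) = M * ((2 : K)⁻¹ • (1 - A)) := by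
    rw [inv_smul_one hσ, Matrix.smul_mul, Matrix.one_mul, Matrix.mul_smul, hY, smul_smul,
      Matrix.mul_smul]
    congr 1
    field_simp
  rw [Matrix.mul_assoc, Matrix.mul_assoc, h, ← Matrix.mul_assoc,
    nonsing_inv_mul M ((isUnit_iff_isUnit_det M).1 hM), Matrix.one_mul, smul_smul]
  norm_num

theorem posSemidef_fromBlocks_sub_smul_one {P B Y : Matrix ι ι ℝ} {ε r : ℝ} (hε : 0 < ε)
    (hr0 : 0 < r) (hPB : P * B + Bᵀ * P = P + Bᵀ * B)
    (hr : (r • (Bᵀ * B) - (1 + P)).PosSemidef) (hY : Y.IsHermitian)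
    (hYY : Y * Y = (ε * r * (ε * (1 + r))) • P) :
    (fromBlocks ((ε * r) • (P * B + Bᵀ * P)) Y Y ((ε * (1 + r)) • 1) - ε • 1).PosSemidef := by
  have hD : ((ε * r) • 1 : Matrix ι ι ℝ).PosDef := PosDef.one.smul (by positivity)
  let := hD.isUnit.invertible
  have hblocks : fromBlocks ((ε * r) • (P * B + Bᵀ * P)) Y Y ((ε * (1 + r)) • 1) - ε • 1 =
      fromBlocks ((ε * r) • (P * B + Bᵀ * P) - ε • 1) Y Yᴴ ((ε * r) • 1) := by
    rw [← fromBlocks_one, fromBlocks_smul, sub_eq_add_neg, fromBlocks_neg, fromBlocks_add,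
      hY.eq]
    congr 1
    all_goals first | simp | module
  have hschur : (ε * r) • (P * B + Bᵀ * P) - ε • 1 - Y * ((ε * r) • 1)⁻¹ * Yᴴ =
      ε • (r • (Bᵀ * B) - (1 + P)) := by
    rw [hY.eq, inv_smul_one (by positivity), Matrix.mul_smul, Matrix.mul_one, Matrix.smul_mul,
      hYY, smul_smul, inv_mul_cancel_left₀ (by positivity), hPB]
    module
  rw [hblocks, PosDef.fromBlocks₂₂ _ _ hD, hschur]
  exact hr.smul hε.le

end Matrix

namespace IsSchur

variable {n : ℕ} {A : Matrix (Fin n) (Fin n) ℝ}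

theorem nnnorm_lt_one_of_mem_spectrum (hA : IsSchur A) {z : ℂ}
    (hz : z ∈ spectrum ℂ (A.map (algebraMap ℝ ℂ))) : ‖z‖₊ < 1 := by
  rw [mem_spectrum_iff_isRoot_charpoly, charpoly_map] at hz
  exact_mod_cast hA z hz

theorem isUnit_one_sub (hA : IsSchur A) : IsUnit (1 - A) := by
  have h1 : (1 : ℝ) ∉ spectrum ℝ A := fun h => by
    rw [mem_spectrum_iff_isRoot_charpoly] at h
    simpa using hA 1 (by simpa using h.map (f := algebraMap ℝ ℂ))
  simpa [spectrum.notMem_iff] using h1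

open scoped Matrix.Norms.Frobenius in
theorem summable_transpose_pow_mul_pow (hA : IsSchur A) :
    Summable fun k => (Aᵀ) ^ k * A ^ k := by
  obtain ⟨r, hr1, hr⟩ := exists_lt_one_eventually_nnnorm_pow_le
    fun z hz => hA.nnnorm_lt_one_of_mem_spectrum hz
  refine Summable.of_norm_bounded_eventually_nat (NNReal.summable_coe.2
    (NNReal.summable_geometric (r := r ^ 2) (pow_lt_one₀ r.2 hr1 two_ne_zero))) ?_
  filter_upwards [hr] with k hk
  rw [← RingHom.mapMatrix_apply, ← map_pow, RingHom.mapMatrix_apply,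
    frobenius_nnnorm_map_eq _ _ (by simp)] at hk
  calc ‖(Aᵀ) ^ k * A ^ k‖ ≤ ‖(Aᵀ) ^ k‖ * ‖A ^ k‖ := norm_mul_le _ _
    _ = ‖A ^ k‖ ^ 2 := by rw [← transpose_pow, frobenius_norm_transpose, sq]
    _ ≤ ((r ^ 2) ^ k : ℝ≥0) := by
      rw [← pow_mul, mul_comm, pow_mul]
      push_cast
      exact pow_le_pow_left₀ (norm_nonneg _) (mod_cast hk) 2

end IsSchur

theorem stmt_3 {n : ℕ} (A : Matrix (Fin n) (Fin n) ℝ)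
    (hA : IsSchur A) (ε : ℝ) (hε : 0 < ε) :
    ∃ (W : Matrix (Fin n ⊕ Fin n) (Fin n ⊕ Fin n) ℝ) (V : Matrix (Fin n) (Fin n) ℝ),
      let S := Wᵀ * W + ε • (1 : Matrix (Fin n ⊕ Fin n) (Fin n ⊕ Fin n) ℝ)
      IsUnit (S.toBlocks₁₁ + V - Vᵀ) ∧ IsUnit S.toBlocks₂₂ ∧
        A = (1 : Matrix (Fin n) (Fin n) ℝ) -
          (2 : ℝ) • ((S.toBlocks₁₁ + V - Vᵀ)⁻¹ * S.toBlocks₁₂ * (S.toBlocks₂₂)⁻¹ * S.toBlocks₂₁) := by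
  obtain ⟨P, hP, hstein⟩ :=
    exists_posDef_transpose_mul_mul_eq_sub_one hA.summable_transpose_pow_mul_pow
  obtain ⟨B, hB⟩ := hA.isUnit_one_sub.exists_right_inv
  obtain ⟨r, hr0, hr⟩ :=
    (isHermitian_one.add hP.isHermitian).exists_posSemidef_smul_conjTranspose_mul_self_sub hB
  rw [conjTranspose_eq_transpose_of_trivial] at hr
  set t := ε * r
  set σ := ε * (1 + r)
  obtain ⟨Y, hY, hYY⟩ :=
    (hP.posSemidef.smul (by positivity : 0 ≤ t * σ)).exists_isHermitian_mul_self_eq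
  obtain ⟨W, hW, hWW⟩ := (posSemidef_fromBlocks_sub_smul_one hε hr0
    (mul_add_transpose_mul_eq hstein hB) hr hY hYY).exists_isHermitian_mul_self_eq
  have hS : Wᵀ * W + ε • 1 = fromBlocks (t • (P * B + Bᵀ * P)) Y Y (σ • 1) := by
    rw [← conjTranspose_eq_transpose_of_trivial, hW.eq, hWW, sub_add_cancel]
  have hK : t • (P * B + Bᵀ * P) + t • (P * B) - (t • (P * B))ᵀ = (2 * t) • (P * B) := by
    rw [transpose_smul, transpose_mul, (by simpa using hP.isHermitian.eq : Pᵀ = P)]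
    module
  have hKunit : IsUnit ((2 * t) • (P * B)) :=
    (hP.isUnit.mul (.of_mul_eq_one_right _ hB)).smul (Units.mk0 (2 * t) (by positivity))
  refine ⟨W, t • (P * B), ?_⟩
  dsimp only
  rw [hS, toBlocks_fromBlocks₁₁, toBlocks_fromBlocks₁₂, toBlocks_fromBlocks₂₁,
    toBlocks_fromBlocks₂₂, hK]
  refine ⟨hKunit, isUnit_one.smul (Units.mk0 σ (by positivity)),
    eq_one_sub_two_smul_inv_mul_mul (by positivity) hKunit ?_⟩
  rw [hYY, Matrix.smul_mul, Matrix.mul_assoc, mul_eq_one_comm.1 hB, Matrix.mul_one, smul_smul]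
  congr 1
  ring
end

section
/- Let M ∈ {0,1}^{n×n} be a sparsity pattern, let W ∈ ℝ^{2n×2n}, V ∈ ℝ^{n×n}, and ε > 0. Set S := WᵀW + ε·I_{2n}, and let N ∈ ℝ^{n×n} be the diagonal matrix with diagonal entries N_{ii} := max{ Σ_{j=1}^n M_{ij}, Σ_{j=1}^n M_{ji} } + ε for all i = 1,…,n. Then the matrix N ⊙ ((1/2)·(S₁₁ + S₂₂) + V − Vᵀ) is invertible, and the matrix A := M ⊙ ( S₁₂ · [ N ⊙ ((1/2)·(S₁₁ + S₂₂) + V − Vᵀ) ]⁻¹ ) is a Schur matrix whose entries satisfy A_{ij} = 0 whenever M_{ij} = 0 (i.e., A has the sparsity pattern M). -/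
/-!
Since `N` is diagonal, `T` is the diagonal matrix with entries
`d i = N i i * (S₁₁ i i + S₂₂ i i) / 2` (the skew part `V - Vᵀ` has zero diagonal), and these are
positive because `S` is positive definite. Conjugating `A` by the diagonal weights
`w j = d j / √(S₂₂ j j)` does not change its spectrum. By the Cauchy–Schwarz bound
`|S₁₂ i j| ≤ √(S₁₁ i i) √(S₂₂ j j)` for positive semidefinite matrices and AM–GM, the `i`-th
weighted absolute row sum of `A` is at most `(∑ j, M i j) √(S₁₁ i i) < d i / √(S₂₂ i i) = w i`,
so Gershgorin's theorem puts every eigenvalue in the open unit disc.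
-/

open Matrix Polynomial

namespace Matrix

theorem PosSemidef.sq_apply_le_mul_apply {ι : Type*} {P : Matrix ι ι ℝ} (hP : P.PosSemidef)
    (a b : ι) : P a b ^ 2 ≤ P a a * P b b := by
  have h := (hP.submatrix ![a, b]).det_nonneg
  have hsymm : P b a = P a b := hP.1.apply a b
  rw [det_fin_two] at h
  simp only [submatrix_apply, cons_val_zero, cons_val_one, hsymm] at h
  nlinarith

theorem PosSemidef.abs_apply_le_sqrt_mul_sqrt {ι : Type*} {P : Matrix ι ι ℝ}
    (hP : P.PosSemidef) (a b : ι) : |P a b| ≤ √(P a a) * √(P b b) := by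
  rw [← Real.sqrt_mul hP.diag_nonneg]
  exact Real.abs_le_sqrt (hP.sq_apply_le_mul_apply a b)

theorem exists_norm_le_sum_norm_row_of_mem_spectrum {K ι : Type*} [NormedField K] [Fintype ι]
    [DecidableEq ι] {A : Matrix ι ι K} {μ : K} (hμ : μ ∈ spectrum K A) :
    ∃ k, ‖μ‖ ≤ ∑ j, ‖A k j‖ := by
  rw [← spectrum_toLin', ← Module.End.hasEigenvalue_iff_mem_spectrum] at hμ
  obtain ⟨k, hk⟩ := eigenvalue_mem_ball hμ
  refine ⟨k, ?_⟩
  rw [mem_closedBall_iff_norm] at hk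
  rw [← Finset.add_sum_erase _ _ (Finset.mem_univ k)]
  calc ‖μ‖ ≤ ‖A k k‖ + ‖μ - A k k‖ := norm_le_norm_add_norm_sub' μ (A k k)
    _ ≤ _ := by gcongr

theorem diagonal_hadamard_add_sub_transpose {ι α : Type*} [DecidableEq ι] [CommRing α]
    (w : ι → α) (B V : Matrix ι ι α) : diagonal w ⊙ (B + V - Vᵀ) = diagonal (w * B.diag) := by
  rw [diagonal_hadamard, diag_sub, diag_add, diag_transpose, add_sub_cancel_right]

theorem inv_diagonal_of_ne_zero {ι K : Type*} [Fintype ι] [DecidableEq ι] [Field K]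
    {d : ι → K} (hd : ∀ i, d i ≠ 0) : (diagonal d)⁻¹ = diagonal d⁻¹ := by
  refine inv_eq_left_inv ?_
  rw [diagonal_mul_diagonal, ← diagonal_one]
  exact congrArg diagonal (funext fun i => inv_mul_cancel₀ (hd i))

end Matrix

theorem sqrt_mul_sqrt_le_add_div_two {x y : ℝ} (hx : 0 ≤ x) (hy : 0 ≤ y) :
    √x * √y ≤ (x + y) / 2 := by
  nlinarith [sq_nonneg (√x - √y), Real.sq_sqrt hx, Real.sq_sqrt hy]

theorem isSchur_of_sum_abs_row_lt_one {n : ℕ} {A : Matrix (Fin n) (Fin n) ℝ}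
    (h : ∀ i, ∑ j, |A i j| < 1) : IsSchur A := by
  intro μ hμ
  rw [← charpoly_map, ← mem_spectrum_iff_isRoot_charpoly] at hμ
  obtain ⟨k, hk⟩ := exists_norm_le_sum_norm_row_of_mem_spectrum hμ
  refine hk.trans_lt (lt_of_eq_of_lt ?_ (h k))
  simp

theorem isSchur_of_weighted_sum_abs_row_lt {n : ℕ} {A : Matrix (Fin n) (Fin n) ℝ}
    (w : Fin n → ℝ) (hw : ∀ i, 0 < w i) (h : ∀ i, ∑ j, |A i j| * w j < w i) : IsSchur A := by
  have hconj : (diagonal w⁻¹ * (A * diagonal w)).charpoly = A.charpoly := by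
    have hw_inv : (fun i => w i * w⁻¹ i) = 1 := funext fun i => mul_inv_cancel₀ (hw i).ne'
    rw [charpoly_mul_comm, mul_assoc, diagonal_mul_diagonal, hw_inv, diagonal_one', mul_one]
  unfold IsSchur
  rw [← hconj]
  refine isSchur_of_sum_abs_row_lt_one fun i => ?_
  have hrow : ∑ j, |(diagonal w⁻¹ * (A * diagonal w)) i j| = (∑ j, |A i j| * w j) / w i := by
    simp only [diagonal_mul, mul_diagonal, Pi.inv_apply, Finset.sum_div]
    refine Finset.sum_congr rfl fun j _ => ?_
    rw [abs_mul, abs_mul, abs_inv, abs_of_pos (hw i), abs_of_pos (hw j)]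
    ring
  rw [hrow, div_lt_one (hw i)]
  exact h i

theorem isSchur_hadamard_toBlocks₁₂_mul_inv_diagonal {n : ℕ} {M : Matrix (Fin n) (Fin n) ℝ}
    (hM : ∀ i j, 0 ≤ M i j) {P : Matrix (Fin n ⊕ Fin n) (Fin n ⊕ Fin n) ℝ} (hP : P.PosDef)
    {d : Fin n → ℝ}
    (hd : ∀ i, (∑ j, M i j) * ((P.toBlocks₁₁ i i + P.toBlocks₂₂ i i) / 2) < d i) :
    IsSchur (M ⊙ (P.toBlocks₁₂ * (diagonal d)⁻¹)) := by
  have hs : ∀ i, 0 < P.toBlocks₁₁ i i := fun i => hP.diag_pos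
  have ht : ∀ i, 0 < P.toBlocks₂₂ i i := fun i => hP.diag_pos
  have hrow : ∀ i, 0 ≤ ∑ j, M i j := fun i => Finset.sum_nonneg fun j _ => hM i j
  have hd_pos : ∀ i, 0 < d i := fun i =>
    (mul_nonneg (hrow i) (by linarith [hs i, ht i])).trans_lt (hd i)
  rw [inv_diagonal_of_ne_zero fun i => (hd_pos i).ne']
  refine isSchur_of_weighted_sum_abs_row_lt (fun j => d j / √(P.toBlocks₂₂ j j))
    (fun j => div_pos (hd_pos j) (Real.sqrt_pos.2 (ht j))) fun i => ?_
  calc ∑ j, |(M ⊙ (P.toBlocks₁₂ * diagonal d⁻¹)) i j| * (d j / √(P.toBlocks₂₂ j j))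
      = ∑ j, M i j * (|P.toBlocks₁₂ i j| / √(P.toBlocks₂₂ j j)) := by
        refine Finset.sum_congr rfl fun j _ => ?_
        rw [hadamard_apply, mul_diagonal, Pi.inv_apply, abs_mul, abs_mul, abs_of_nonneg (hM i j),
          abs_inv, abs_of_pos (hd_pos j)]
        field_simp [(hd_pos j).ne']
    _ ≤ ∑ j, M i j * √(P.toBlocks₁₁ i i) := by
        gcongr with j
        · exact hM i j
        rw [div_le_iff₀ (Real.sqrt_pos.2 (ht j))]
        exact hP.posSemidef.abs_apply_le_sqrt_mul_sqrt (.inl i) (.inr j)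
    _ = (∑ j, M i j) * √(P.toBlocks₁₁ i i) := (Finset.sum_mul ..).symm
    _ < d i / √(P.toBlocks₂₂ i i) := by
        rw [lt_div_iff₀ (Real.sqrt_pos.2 (ht i)), mul_assoc]
        exact (mul_le_mul_of_nonneg_left (sqrt_mul_sqrt_le_add_div_two (hs i).le (ht i).le)
          (hrow i)).trans_lt (hd i)

theorem stmt_4 {n : ℕ} (M : Matrix (Fin n) (Fin n) ℝ)
    (hM : ∀ i j, M i j = 0 ∨ M i j = 1)
    (W : Matrix (Fin n ⊕ Fin n) (Fin n ⊕ Fin n) ℝ)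
    (V : Matrix (Fin n) (Fin n) ℝ) (ε : ℝ) (hε : 0 < ε) :
    let S := Wᵀ * W + ε • (1 : Matrix (Fin n ⊕ Fin n) (Fin n ⊕ Fin n) ℝ)
    let N : Matrix (Fin n) (Fin n) ℝ :=
      Matrix.diagonal fun i => max (∑ j, M i j) (∑ j, M j i) + ε
    let T := N ⊙ ((1 / 2 : ℝ) • (S.toBlocks₁₁ + S.toBlocks₂₂) + V - Vᵀ)
    let A := M ⊙ (S.toBlocks₁₂ * T⁻¹)
    IsUnit T ∧ IsSchur A ∧ ∀ i j, M i j = 0 → A i j = 0 := by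
  intro S N T A
  have hM_nonneg : ∀ i j, 0 ≤ M i j := fun i j => (hM i j).elim (·.ge) fun h => h ▸ zero_le_one
  have hS : S.PosDef := by
    simpa [S, conjTranspose_eq_transpose_of_trivial] using
      PosDef.posSemidef_add (posSemidef_conjTranspose_mul_self W) (PosDef.one.smul hε)
  set d := (fun i => max (∑ j, M i j) (∑ j, M j i) + ε) *
    ((1 / 2 : ℝ) • (S.toBlocks₁₁ + S.toBlocks₂₂)).diag
  have hT : T = diagonal d := diagonal_hadamard_add_sub_transpose _ _ _
  have hdiag : ∀ i, 0 < S.toBlocks₁₁ i i + S.toBlocks₂₂ i i := fun i =>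
    add_pos hS.diag_pos hS.diag_pos
  have hrow : ∀ i, 0 ≤ ∑ j, M i j := fun i => Finset.sum_nonneg fun j _ => hM_nonneg i j
  have hd : ∀ i, (∑ j, M i j) * ((S.toBlocks₁₁ i i + S.toBlocks₂₂ i i) / 2) < d i := fun i => by
    simp only [d, Pi.mul_apply, diag_apply, Matrix.smul_apply, Matrix.add_apply, smul_eq_mul]
    nlinarith [le_max_left (∑ j, M i j) (∑ j, M j i), hdiag i]
  have hd_pos : ∀ i, 0 < d i := fun i =>
    (mul_nonneg (hrow i) (half_pos (hdiag i)).le).trans_lt (hd i)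
  refine ⟨hT ▸ isUnit_diagonal.2 (Pi.isUnit_iff.2 fun i => (hd_pos i).ne'.isUnit), ?_,
    fun i j h => by simp [A, h]⟩
  show IsSchur (M ⊙ (S.toBlocks₁₂ * T⁻¹))
  rw [hT]
  exact isSchur_hadamard_toBlocks₁₂_mul_inv_diagonal hM_nonneg hS hd
end

section
/- Let A ∈ ℝ^{n×n} and let Q ∈ ℝ^{n×n} be symmetric positive definite. Then Q − A·Q·Aᵀ is positive definite if and only if there exists a matrix G ∈ ℝ^{n×n} such that the block matrix [[Q, A·G],[Gᵀ·Aᵀ, Gᵀ + G − Q]] ∈ ℝ^{2n×2n} is positive definite. -/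
/-!
For `G = Q` the block matrix is `[[Q, AQ], [QAᵀ, Q]]`, whose Schur complement with respect to its
lower-right block is `Q - AQAᵀ`. Conversely, completing the square with
`(G - Q)ᵀQ⁻¹(G - Q) ≥ 0` turns the Schur complement with respect to `Q` into a lower bound for
`Gᵀ(Q⁻¹ - AᵀQ⁻¹A)G`, so `G` is invertible and `Q⁻¹ - AᵀQ⁻¹A` is positive definite. Comparing the
two Schur complements of `[[Q⁻¹, Aᵀ], [A, Q]]` shows that this is equivalent to `Q - AQAᵀ > 0`.
-/

open Matrix
open scoped ComplexOrder

namespace Matrix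

variable {m n 𝕜 : Type*} [Fintype m] [Fintype n] [DecidableEq m] [DecidableEq n] [RCLike 𝕜]

theorem posDef_iff_posSemidef_and_det_ne_zero {M : Matrix n n 𝕜} :
    M.PosDef ↔ M.PosSemidef ∧ M.det ≠ 0 :=
  ⟨fun h => ⟨h.posSemidef, h.posSemidef.posDef_iff_det_ne_zero.mp h⟩,
    fun h => h.1.posDef_iff_det_ne_zero.mpr h.2⟩

theorem PosDef.posDef_fromBlocks₁₁_iff {A : Matrix m m 𝕜} (B : Matrix m n 𝕜) (D : Matrix n n 𝕜)
    (hA : A.PosDef) [Invertible A] :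
    (fromBlocks A B Bᴴ D).PosDef ↔ (D - Bᴴ * A⁻¹ * B).PosDef := by
  simp only [posDef_iff_posSemidef_and_det_ne_zero, hA.fromBlocks₁₁, det_fromBlocks₁₁,
    invOf_eq_nonsing_inv, mul_ne_zero_iff, hA.det_pos.ne', ne_eq, not_false_eq_true, true_and]

theorem PosDef.posDef_fromBlocks₂₂_iff (A : Matrix m m 𝕜) (B : Matrix m n 𝕜) {D : Matrix n n 𝕜}
    (hD : D.PosDef) [Invertible D] :
    (fromBlocks A B Bᴴ D).PosDef ↔ (A - B * D⁻¹ * Bᴴ).PosDef := by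
  simp only [posDef_iff_posSemidef_and_det_ne_zero, hD.fromBlocks₂₂, det_fromBlocks₂₂,
    invOf_eq_nonsing_inv, mul_ne_zero_iff, hD.det_pos.ne', ne_eq, not_false_eq_true, true_and]

theorem isUnit_of_posDef_conjTranspose_mul_mul {X B : Matrix n n 𝕜} (h : (Bᴴ * X * B).PosDef) :
    IsUnit B := by
  have hdet := (isUnit_iff_isUnit_det _).mp h.isUnit
  rw [det_mul] at hdet
  exact (isUnit_iff_isUnit_det B).mpr (isUnit_of_mul_isUnit_right hdet)

theorem PosDef.posDef_sub_mul_mul_conjTranspose_iff {Q : Matrix n n 𝕜} (hQ : Q.PosDef)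
    (A : Matrix n n 𝕜) : (Q - A * Q * Aᴴ).PosDef ↔ (Q⁻¹ - Aᴴ * Q⁻¹ * A).PosDef := by
  have := hQ.isUnit.invertible
  have := hQ.inv.isUnit.invertible
  have h₁₁ := hQ.inv.posDef_fromBlocks₁₁_iff Aᴴ Q
  rw [inv_inv_of_invertible, conjTranspose_conjTranspose] at h₁₁
  have h₂₂ := hQ.posDef_fromBlocks₂₂_iff Q⁻¹ Aᴴ
  rw [conjTranspose_conjTranspose] at h₂₂
  exact h₁₁.symm.trans h₂₂

theorem conjTranspose_sub_mul_inv_mul_sub {Q : Matrix n n 𝕜} (hQ : Q.IsHermitian) [Invertible Q]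
    (G : Matrix n n 𝕜) : (G - Q)ᴴ * Q⁻¹ * (G - Q) = Gᴴ * Q⁻¹ * G - (Gᴴ + G - Q) := by
  simp only [conjTranspose_sub, hQ.eq, Matrix.sub_mul, Matrix.mul_sub, Matrix.mul_assoc,
    inv_mul_of_invertible, mul_inv_cancel_left_of_invertible, Matrix.mul_one]
  abel

end Matrix

theorem stmt_7 {n : ℕ} (A Q : Matrix (Fin n) (Fin n) ℝ) (hQ : Q.PosDef) :
    (Q - A * Q * Aᵀ).PosDef ↔
      ∃ G : Matrix (Fin n) (Fin n) ℝ,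
        (Matrix.fromBlocks Q (A * G) (Gᵀ * Aᵀ) (Gᵀ + G - Q)).PosDef := by
  have := hQ.isUnit.invertible
  simp only [← conjTranspose_eq_transpose_of_trivial, ← conjTranspose_mul]
  constructor
  · intro h
    refine ⟨Q, ?_⟩
    rw [hQ.1.eq, add_sub_cancel_right, hQ.posDef_fromBlocks₂₂_iff, conjTranspose_mul, hQ.1.eq,
      Matrix.mul_assoc A, mul_inv_of_invertible, Matrix.mul_one, ← Matrix.mul_assoc]
    exact h
  · rintro ⟨G, hG⟩
    have hSchur := (hQ.posDef_fromBlocks₁₁_iff (A * G) _).mp hG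
    have hcongr : (Gᴴ * (Q⁻¹ - Aᴴ * Q⁻¹ * A) * G).PosDef := by
      have hsplit : Gᴴ * (Q⁻¹ - Aᴴ * Q⁻¹ * A) * G =
          (Gᴴ + G - Q - (A * G)ᴴ * Q⁻¹ * (A * G)) + (G - Q)ᴴ * Q⁻¹ * (G - Q) := by
        rw [conjTranspose_sub_mul_inv_mul_sub hQ.1, sub_add_sub_cancel', conjTranspose_mul]
        simp only [Matrix.mul_sub, Matrix.sub_mul, Matrix.mul_assoc]
      rw [hsplit]
      exact hSchur.add_posSemidef (hQ.inv.posSemidef.conjTranspose_mul_mul_same (G - Q))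
    have hG_unit := isUnit_of_posDef_conjTranspose_mul_mul hcongr
    rw [← star_eq_conjTranspose, hG_unit.posDef_star_left_conjugate_iff] at hcongr
    exact (hQ.posDef_sub_mul_mul_conjTranspose_iff A).mpr hcongr
end

section
/- A matrix A ∈ ℝ^{n×n} is Schur if and only if there exists a symmetric positive definite matrix Q ∈ ℝ^{n×n} such that Q − Aᵀ·Q·A is positive definite. -/
/-!
If all eigenvalues of `A` lie in the open unit disc, Gelfand's formula makes `∑ ‖Aᵏ‖` converge,
so `Q = ∑ₖ (Aᵏ)ᵀ Aᵏ` exists. Splitting off the term `k = 0` gives the Stein equation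
`Q = 1 + Aᵀ Q A`. Hence `Q - Aᵀ Q A = 1`, and `Q` is positive definite because `Q`, a limit of
positive semidefinite partial sums, is positive semidefinite.

Conversely, if `A v = μ v` for a nonzero complex vector `v`, then
`v* (Q - Aᵀ Q A) v = (1 - |μ|²) v* Q v`, and both quadratic forms are positive.
-/

open Matrix Polynomial

open Filter
open scoped ComplexOrder

section Topological

variable {n R : Type*} [Fintype n] [Ring R] [StarRing R] [TopologicalSpace R]
  [IsTopologicalRing R] [T2Space R]

theorem Matrix.tsum_conjTranspose_pow_mul_pow_sub [DecidableEq n] {A : Matrix n n R}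
    (hA : Summable fun k => (A ^ k)ᴴ * A ^ k) :
    (∑' k, (A ^ k)ᴴ * A ^ k) - Aᴴ * (∑' k, (A ^ k)ᴴ * A ^ k) * A = 1 := by
  have hshift : ∀ k, (A ^ (k + 1))ᴴ * A ^ (k + 1) = Aᴴ * ((A ^ k)ᴴ * A ^ k) * A := fun k => by
    simp only [pow_succ, conjTranspose_mul, Matrix.mul_assoc]
  refine sub_eq_iff_eq_add.mpr ?_
  calc ∑' k, (A ^ k)ᴴ * A ^ k = (A ^ 0)ᴴ * A ^ 0 + ∑' k, (A ^ (k + 1))ᴴ * A ^ (k + 1) :=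
        hA.tsum_eq_zero_add
    _ = 1 + Aᴴ * (∑' k, (A ^ k)ᴴ * A ^ k) * A := by
        simp_rw [hshift, (hA.mul_left Aᴴ).tsum_mul_right, hA.tsum_mul_left]
        simp

variable [PartialOrder R] [ContinuousStar R] [ClosedIciTopology R]

theorem Matrix.isClosed_setOf_posSemidef_s8 : IsClosed {M : Matrix n n R | M.PosSemidef} := by
  simp only [posSemidef_iff_dotProduct_mulVec, Set.ofPred_and, Set.ofPred_forall]
  refine .inter (isClosed_eq (by fun_prop) continuous_id) (isClosed_iInter fun x => ?_)
  exact isClosed_Ici.preimage (by fun_prop)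

theorem Matrix.PosSemidef.tsum_s8 [AddLeftMono R] {ι : Type*} {f : ι → Matrix n n R}
    (hf : ∀ i, (f i).PosSemidef) : (∑' i, f i).PosSemidef := by
  by_cases hs : Summable f
  · exact isClosed_setOf_posSemidef_s8.mem_of_tendsto hs.hasSum
      (.of_forall fun s => posSemidef_sum s fun i _ => hf i)
  · rw [tsum_eq_zero_of_not_summable hs]
    exact .zero

theorem Matrix.posDef_tsum_conjTranspose_pow_mul_pow [DecidableEq n] [StarOrderedRing R]
    [NoZeroDivisors R] {A : Matrix n n R} (hA : Summable fun k => (A ^ k)ᴴ * A ^ k) :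
    (∑' k, (A ^ k)ᴴ * A ^ k).PosDef := by
  rw [sub_eq_iff_eq_add.mp (tsum_conjTranspose_pow_mul_pow_sub hA)]
  exact PosDef.one.add_posSemidef
    ((PosSemidef.tsum_s8 fun k => posSemidef_conjTranspose_mul_self _).conjTranspose_mul_mul_same A)

end Topological

theorem summable_norm_pow_of_spectralRadius_lt_one {A : Type*} [NormedRing A] [NormedAlgebra ℂ A]
    [CompleteSpace A] {a : A} (ha : spectralRadius ℂ a < 1) : Summable fun k => ‖a ^ k‖ := by
  obtain ⟨r, hρr, hr1⟩ := ENNReal.lt_iff_exists_nnreal_btwn.mp ha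
  have hpow : ∀ᶠ k : ℕ in atTop, ‖a ^ k‖ ≤ (r : ℝ) ^ k := by
    filter_upwards [(spectrum.pow_norm_pow_one_div_tendsto_nhds_spectralRadius a).eventually_lt_const
      hρr, eventually_gt_atTop 0] with k hk hk0
    rw [ENNReal.ofReal_lt_iff_lt_toReal (by positivity) ENNReal.coe_ne_top, ENNReal.coe_toReal,
      one_div, Real.rpow_inv_lt_iff_of_pos (norm_nonneg _) r.coe_nonneg (by positivity),
      Real.rpow_natCast] at hk
    exact hk.le
  exact .of_norm_bounded_eventually_nat
    (summable_geometric_of_lt_one r.coe_nonneg (by exact_mod_cast hr1)) (by simpa using hpow)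

section RCLike

variable {n 𝕜 : Type*} [Fintype n] [RCLike 𝕜]

theorem Matrix.re_star_dotProduct_map_mulVec (M : Matrix n n ℝ) (v : n → 𝕜) :
    RCLike.re (star v ⬝ᵥ (M.map (algebraMap ℝ 𝕜) *ᵥ v)) =
      (fun i => RCLike.re (v i)) ⬝ᵥ (M *ᵥ fun i => RCLike.re (v i)) +
        (fun i => RCLike.im (v i)) ⬝ᵥ (M *ᵥ fun i => RCLike.im (v i)) := by
  simp only [dotProduct, mulVec, Finset.mul_sum, ← Finset.sum_add_distrib, map_sum]
  refine Finset.sum_congr rfl fun i _ => Finset.sum_congr rfl fun j _ => ?_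
  simp [RCLike.mul_re, RCLike.conj_re]

theorem Matrix.PosDef.map_algebraMap {Q : Matrix n n ℝ} (hQ : Q.PosDef) :
    (Q.map (algebraMap ℝ 𝕜)).PosDef := by
  have hH : (Q.map (algebraMap ℝ 𝕜)).IsHermitian := by
    ext i j
    simpa using congr_fun₂ hQ.isHermitian i j
  refine .of_dotProduct_mulVec_pos hH fun v hv =>
    RCLike.pos_iff.mpr ⟨?_, hH.im_star_dotProduct_mulVec_self v⟩
  rw [re_star_dotProduct_map_mulVec]
  have hre_im : (fun i => RCLike.re (v i)) ≠ 0 ∨ (fun i => RCLike.im (v i)) ≠ 0 := by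
    contrapose! hv
    ext i
    exact RCLike.ext (by simpa using congr_fun hv.1 i) (by simpa using congr_fun hv.2 i)
  rcases hre_im with h | h
  · exact add_pos_of_pos_of_nonneg (by simpa using hQ.dotProduct_mulVec_pos h)
      (by simpa using hQ.posSemidef.dotProduct_mulVec_nonneg _)
  · exact add_pos_of_nonneg_of_pos (by simpa using hQ.posSemidef.dotProduct_mulVec_nonneg _)
      (by simpa using hQ.dotProduct_mulVec_pos h)

theorem Matrix.map_sub_transpose_mul_mul (A Q : Matrix n n ℝ) :
    (Q - Aᵀ * Q * A).map (algebraMap ℝ 𝕜) = Q.map (algebraMap ℝ 𝕜) -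
      (A.map (algebraMap ℝ 𝕜))ᴴ * Q.map (algebraMap ℝ 𝕜) * A.map (algebraMap ℝ 𝕜) := by
  ext i j
  simp [Matrix.mul_apply, Finset.sum_mul]

theorem Matrix.PosDef.norm_lt_one_of_mulVec_eq_smul {B Q : Matrix n n 𝕜}
    (hB : (Q - Bᴴ * Q * B).PosDef) (hQ : Q.PosDef) {μ : 𝕜} {v : n → 𝕜} (hv : v ≠ 0)
    (hμ : B *ᵥ v = μ • v) : ‖μ‖ < 1 := by
  have hconj : star v ⬝ᵥ ((Bᴴ * Q * B) *ᵥ v) = (‖μ‖ ^ 2 : 𝕜) * (star v ⬝ᵥ (Q *ᵥ v)) := by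
    rw [← mulVec_mulVec, ← mulVec_mulVec, dotProduct_mulVec, vecMul_conjTranspose, star_star, hμ,
      star_smul, mulVec_smul, smul_dotProduct, dotProduct_smul, smul_smul, smul_eq_mul,
      RCLike.star_def, RCLike.conj_mul]
  have hquad : star v ⬝ᵥ ((Q - Bᴴ * Q * B) *ᵥ v) =
      (1 - ‖μ‖ ^ 2 : 𝕜) * (star v ⬝ᵥ (Q *ᵥ v)) := by
    rw [sub_mulVec, dotProduct_sub, hconj]
    ring
  have hdiff := hB.re_dotProduct_pos hv
  have hform := hQ.re_dotProduct_pos hv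
  rw [hquad, ← RCLike.ofReal_pow, ← RCLike.ofReal_one, ← RCLike.ofReal_sub,
    RCLike.re_ofReal_mul] at hdiff
  exact (sq_lt_one_iff₀ (norm_nonneg μ)).mp (by nlinarith)

end RCLike

open Module End in
theorem Matrix.exists_mulVec_eq_smul_of_isRoot_charpoly_s8 {n K : Type*} [Fintype n] [DecidableEq n]
    [Field K] {A : Matrix n n K} {μ : K} (hμ : A.charpoly.IsRoot μ) : ∃ v ≠ 0, A *ᵥ v = μ • v := by
  rw [← charpoly_toLin', ← hasEigenvalue_iff_isRoot_charpoly] at hμ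
  obtain ⟨v, hv⟩ := hμ.exists_hasEigenvector
  exact ⟨v, hv.2, by simpa using hv.apply_eq_smul⟩

namespace IsSchur

variable {n : ℕ} {A : Matrix (Fin n) (Fin n) ℝ}

theorem spectralRadius_lt_one (hA : IsSchur A) :
    spectralRadius ℂ (A.map (algebraMap ℝ ℂ)) < 1 := by
  open scoped Matrix.Norms.Frobenius in
  rcases subsingleton_or_nontrivial (Matrix (Fin n) (Fin n) ℂ) with _ | _
  · simp [spectrum.SpectralRadius.of_subsingleton]
  refine spectrum.spectralRadius_lt_of_forall_lt _ fun μ hμ => ?_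
  rw [mem_spectrum_iff_isRoot_charpoly, charpoly_map] at hμ
  exact_mod_cast hA μ hμ

theorem summable_conjTranspose_pow_mul_pow (hA : IsSchur A) :
    Summable fun k => (A ^ k)ᴴ * A ^ k := by
  -- The Frobenius norm is submultiplicative, invariant under `ᴴ` and unchanged by `ℝ → ℂ`.
  open scoped Matrix.Norms.Frobenius in
  have hnorm : Summable fun k => ‖A ^ k‖ := by
    convert summable_norm_pow_of_spectralRadius_lt_one hA.spectralRadius_lt_one using 2 with k
    rw [← Matrix.map_pow, frobenius_norm_map_eq _ _ (by simp)]
  refine .of_norm_bounded_eventually_nat hnorm ?_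
  filter_upwards [hnorm.tendsto_atTop_zero.eventually_le_const one_pos] with k hk
  calc ‖(A ^ k)ᴴ * A ^ k‖ ≤ ‖(A ^ k)ᴴ‖ * ‖A ^ k‖ := frobenius_norm_mul _ _
    _ = ‖A ^ k‖ * ‖A ^ k‖ := by rw [frobenius_norm_conjTranspose]
    _ ≤ ‖A ^ k‖ := mul_le_of_le_one_left (norm_nonneg _) hk

theorem of_posDef_sub_transpose_mul_mul {Q : Matrix (Fin n) (Fin n) ℝ} (hQ : Q.PosDef)
    (hR : (Q - Aᵀ * Q * A).PosDef) : IsSchur A := by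
  intro μ hμ
  rw [← charpoly_map] at hμ
  obtain ⟨v, hv, hμv⟩ := exists_mulVec_eq_smul_of_isRoot_charpoly_s8 hμ
  have hRℂ := hR.map_algebraMap (𝕜 := ℂ)
  rw [map_sub_transpose_mul_mul] at hRℂ
  exact hRℂ.norm_lt_one_of_mulVec_eq_smul hQ.map_algebraMap hv hμv

end IsSchur

theorem stmt_8 {n : ℕ} (A : Matrix (Fin n) (Fin n) ℝ) :
    IsSchur A ↔ ∃ Q : Matrix (Fin n) (Fin n) ℝ, Q.PosDef ∧ (Q - Aᵀ * Q * A).PosDef := by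
  refine ⟨fun hA => ?_, fun ⟨Q, hQ, hR⟩ => .of_posDef_sub_transpose_mul_mul hQ hR⟩
  have hsum := hA.summable_conjTranspose_pow_mul_pow
  refine ⟨_, posDef_tsum_conjTranspose_pow_mul_pow hsum, ?_⟩
  rw [← conjTranspose_eq_transpose_of_trivial, tsum_conjTranspose_pow_mul_pow_sub hsum]
  exact .one
end
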